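/- Let k, ℓ, b, n₁, n₂ be positive integers with k, ℓ ≤ b, 2(k+b) < n₁, 2(ℓ+b) < n₂. Let R be a proj-intersecting family of k×ℓ rectangles in Z_{n₁} × Z_{n₂}. If the number of distinct bases J₀ ⊆ Z_{n₂} of b-blocking pairs in R is at least 1 and at most ℓ−1, then |R| ≤ 4b² + (ℓ−1)n₁. -/

import Mathlib

/-!
Fix a blocking pair `P, Q` with base `J₀`. The first side of any member of `R` is an interval of
length `k ≤ b`, too short to meet both `P.1` and `Q.1`, which are more than `b` apart; so by
proj-intersection every base meets `J₀`, and there are at most `2ℓ - 1` bases. Over a base that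
is not blocking, all first sides lie within distance `b` of a fixed one, so its fibre has at most
`2(k + b) - 1 ≤ min(4b, n₁)` members; over each of the `m ∈ [1, ℓ - 1]` blocking bases there are
at most `n₁`. Charging `4b` to `ℓ` of the non-blocking fibres and `n₁` to the other
`ℓ - 1 - m` of them gives `|R| ≤ 4b² + (ℓ - 1) n₁`.
-/

/-- Cyclic distance in `ZMod n`: the smaller of the two distances along the cycle. -/
def cdist {n : ℕ} (u v : ZMod n) : ℕ := min (u - v).val (v - u).val

/-- The cyclic interval of length `k` with left end `i` in `ZMod n`. -/
def cInt {n : ℕ} (i : ZMod n) (k : ℕ) : Finset (ZMod n) :=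
  (Finset.range k).image (fun j : ℕ => (i + (j : ZMod n) : ZMod n))

/-- Distance between two cyclic intervals: minimum cyclic distance between elements. -/
noncomputable def iDist {n : ℕ} (I J : Finset (ZMod n)) : ℕ :=
  sInf {d | ∃ u ∈ I, ∃ v ∈ J, d = cdist u v}

/-- `P` is a `k × ℓ` rectangle in `ZMod n₁ × ZMod n₂`. -/
def IsRect {n₁ n₂ : ℕ} (k ℓ : ℕ) (P : Finset (ZMod n₁) × Finset (ZMod n₂)) : Prop :=
  (∃ i, P.1 = cInt i k) ∧ (∃ j, P.2 = cInt j ℓ)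

/-- A family of rectangles is proj-intersecting if any two members have intersecting
projections in at least one coordinate. -/
def ProjIntersecting {n₁ n₂ : ℕ} (R : Finset (Finset (ZMod n₁) × Finset (ZMod n₂))) : Prop :=
  ∀ P ∈ R, ∀ Q ∈ R, (P.1 ∩ Q.1).Nonempty ∨ (P.2 ∩ Q.2).Nonempty

section CyclicIntervals

variable {n : ℕ}

lemma mem_cInt {i x : ZMod n} {k : ℕ} : x ∈ cInt i k ↔ ∃ a < k, x = i + a := by
  simp [cInt, eq_comm]

lemma cInt_nonempty (i : ZMod n) {k : ℕ} (hk : 0 < k) : (cInt i k).Nonempty :=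
  ⟨i, mem_cInt.2 ⟨0, hk, by simp⟩⟩

lemma cdist_comm (u v : ZMod n) : cdist u v = cdist v u :=
  min_comm _ _

lemma cdist_le_of_sub_eq_natCast {u v : ZMod n} {e : ℕ} (h : u - v = e) : cdist u v ≤ e :=
  (min_le_left _ _).trans (h ▸ (ZMod.val_natCast n e).trans_le (Nat.mod_le _ _))

lemma cdist_le_of_mem_cInt {i u v : ZMod n} {k : ℕ} (hu : u ∈ cInt i k) (hv : v ∈ cInt i k) :
    cdist u v ≤ k - 1 := by
  obtain ⟨a, ha, rfl⟩ := mem_cInt.1 hu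
  obtain ⟨a', ha', rfl⟩ := mem_cInt.1 hv
  rcases le_total a' a with h | h
  · exact (cdist_le_of_sub_eq_natCast (e := a - a') (by push_cast [h]; ring)).trans (by omega)
  · rw [cdist_comm]
    exact (cdist_le_of_sub_eq_natCast (e := a' - a) (by push_cast [h]; ring)).trans (by omega)

lemma exists_int_sub_eq_of_cdist_le {u v : ZMod n} {d : ℕ} (h : cdist u v ≤ d) :
    ∃ z : ℤ, |z| ≤ d ∧ u - v = z := by
  rcases n with _ | n
  · have h' : min (u - v : ℤ).natAbs (v - u : ℤ).natAbs ≤ d := h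
    exact ⟨u - v, abs_le.2 ⟨by omega, by omega⟩, Int.cast_id.symm⟩
  · rcases min_le_iff.1 h with h' | h'
    · exact ⟨(u - v).val, by rw [Nat.abs_cast]; exact_mod_cast h', by simp⟩
    · exact ⟨-((v - u).val : ℤ), by rw [abs_neg, Nat.abs_cast]; exact_mod_cast h', by simp⟩

lemma iDist_le_cdist {I J : Finset (ZMod n)} {u v : ZMod n} (hu : u ∈ I) (hv : v ∈ J) :
    iDist I J ≤ cdist u v :=
  Nat.sInf_le ⟨u, hu, v, hv, rfl⟩

lemma iDist_eq_zero_of_inter_nonempty {I J : Finset (ZMod n)} (h : (I ∩ J).Nonempty) :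
    iDist I J = 0 := by
  obtain ⟨u, hu⟩ := h
  rw [Finset.mem_inter] at hu
  exact Nat.le_zero.1 ((iDist_le_cdist hu.1 hu.2).trans (by simp [cdist]))

lemma exists_iDist_eq_cdist {I J : Finset (ZMod n)} (hI : I.Nonempty) (hJ : J.Nonempty) :
    ∃ u ∈ I, ∃ v ∈ J, iDist I J = cdist u v := by
  obtain ⟨u, hu⟩ := hI
  obtain ⟨v, hv⟩ := hJ
  exact Nat.sInf_mem (⟨_, u, hu, v, hv, rfl⟩ : {d | ∃ u ∈ I, ∃ v ∈ J, d = cdist u v}.Nonempty)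

lemma exists_int_sub_eq_of_iDist_cInt_le {i i' : ZMod n} {k b : ℕ} (hk : 0 < k)
    (h : iDist (cInt i k) (cInt i' k) ≤ b) : ∃ z : ℤ, |z| < k + b ∧ i - i' = z := by
  obtain ⟨u, hu, v, hv, huv⟩ := exists_iDist_eq_cdist (cInt_nonempty i hk) (cInt_nonempty i' hk)
  obtain ⟨a, ha, rfl⟩ := mem_cInt.1 hu
  obtain ⟨a', ha', rfl⟩ := mem_cInt.1 hv
  obtain ⟨e, he, hsub⟩ := exists_int_sub_eq_of_cdist_le (huv ▸ h)
  refine ⟨e + a' - a, ?_, by push_cast; linear_combination hsub⟩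
  rw [abs_le] at he
  rw [abs_lt]
  constructor <;> omega

lemma card_le_of_forall_iDist_cInt_le {F : Finset (Finset (ZMod n))} (i₀ : ZMod n) {k b : ℕ}
    (hk : 0 < k) (hF : ∀ I ∈ F, (∃ i, I = cInt i k) ∧ iDist I (cInt i₀ k) ≤ b) :
    F.card ≤ 2 * (k + b) - 1 := by
  have hsub : F ⊆ (Finset.Ioo (-(k + b : ℤ)) (k + b)).image (fun z : ℤ => cInt (i₀ + z) k) := by
    intro I hI
    obtain ⟨⟨i, rfl⟩, hb⟩ := hF I hI
    obtain ⟨z, hz, hiz⟩ := exists_int_sub_eq_of_iDist_cInt_le hk hb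
    exact Finset.mem_image.2 ⟨z, Finset.mem_Ioo.2 (abs_lt.1 hz), by rw [← hiz, add_sub_cancel]⟩
  calc F.card ≤ _ := Finset.card_le_card hsub
    _ ≤ (Finset.Ioo (-(k + b : ℤ)) (k + b)).card := Finset.card_image_le
    _ = 2 * (k + b) - 1 := by rw [Int.card_Ioo]; omega

lemma card_le_of_forall_eq_cInt [NeZero n] {F : Finset (Finset (ZMod n))} {k : ℕ}
    (hF : ∀ I ∈ F, ∃ i, I = cInt i k) : F.card ≤ n := by
  have hsub : F ⊆ Finset.univ.image (cInt · k) := fun I hI => by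
    obtain ⟨i, rfl⟩ := hF I hI
    exact Finset.mem_image_of_mem _ (Finset.mem_univ i)
  calc F.card ≤ _ := Finset.card_le_card hsub
    _ ≤ Finset.univ.card := Finset.card_image_le
    _ = n := by rw [Finset.card_univ, ZMod.card]

end CyclicIntervals

section Fibers

variable {α β : Type*} [DecidableEq β]

lemma card_image_fst_filter_snd_eq [DecidableEq α] (R : Finset (α × β)) (Y : β) :
    ((R.filter (·.2 = Y)).image Prod.fst).card = (R.filter (·.2 = Y)).card :=
  Finset.card_image_of_injOn fun P hP Q hQ h => Prod.ext h (by simp_all)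

lemma card_le_of_card_fiber_le {s : Finset α} {f : α → β} {B : Finset β} {c d : ℕ}
    (hB : B ⊆ s.image f) (hin : ∀ y ∈ B, (s.filter (f · = y)).card ≤ d)
    (hout : ∀ y ∈ s.image f \ B, (s.filter (f · = y)).card ≤ c) :
    s.card ≤ ((s.image f).card - B.card) * c + B.card * d := by
  rw [Finset.card_eq_sum_card_image f s, ← Finset.sum_sdiff hB, ← Finset.card_sdiff_of_subset hB]
  exact add_le_add (Finset.sum_le_card_nsmul _ _ _ hout) (Finset.sum_le_card_nsmul _ _ _ hin)

end Fibers

section Rectangles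

variable {n n₁ n₂ : ℕ}

lemma card_filter_snd_eq_le_of_forall_iDist_le {β : Type*} [DecidableEq β]
    {R : Finset (Finset (ZMod n) × β)} {k b : ℕ} (hk : 0 < k)
    (hrect : ∀ P ∈ R, ∃ i, P.1 = cInt i k) {Y : β}
    (hY : ∀ P ∈ R, ∀ Q ∈ R, P.2 = Y → Q.2 = Y → iDist P.1 Q.1 ≤ b) :
    (R.filter (·.2 = Y)).card ≤ 2 * (k + b) - 1 := by
  rcases (R.filter (·.2 = Y)).eq_empty_or_nonempty with h | ⟨P₀, hP₀⟩
  · simp [h]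
  rw [Finset.mem_filter] at hP₀
  obtain ⟨i₀, hi₀⟩ := hrect P₀ hP₀.1
  rw [← card_image_fst_filter_snd_eq]
  apply card_le_of_forall_iDist_cInt_le i₀ hk
  simp only [Finset.mem_image, Finset.mem_filter, forall_exists_index, and_imp]
  rintro _ P hP hPY rfl
  exact ⟨hrect P hP, hi₀ ▸ hY P hP P₀ hP₀.1 hPY hP₀.2⟩

lemma card_filter_snd_eq_le [NeZero n] {β : Type*} [DecidableEq β]
    {R : Finset (Finset (ZMod n) × β)} {k : ℕ} (hrect : ∀ P ∈ R, ∃ i, P.1 = cInt i k) (Y : β) :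
    (R.filter (·.2 = Y)).card ≤ n := by
  rw [← card_image_fst_filter_snd_eq]
  apply card_le_of_forall_eq_cInt (k := k)
  simp only [Finset.mem_image, Finset.mem_filter, forall_exists_index, and_imp]
  rintro _ P hP - rfl
  exact hrect P hP

variable {R : Finset (Finset (ZMod n₁) × Finset (ZMod n₂))} {k ℓ b : ℕ}
  {P Q : Finset (ZMod n₁) × Finset (ZMod n₂)}

lemma ProjIntersecting.snd_inter_nonempty (hproj : ProjIntersecting R) (hkb : k ≤ b + 1)
    (hP : P ∈ R) (hQ : Q ∈ R) (hPQ : P.2 = Q.2) (hdist : b + 1 ≤ iDist P.1 Q.1)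
    {S : Finset (ZMod n₁) × Finset (ZMod n₂)} (hS : S ∈ R) (hSk : ∃ i, S.1 = cInt i k) :
    (S.2 ∩ P.2).Nonempty := by
  by_contra hdisj
  have meets : ∀ T ∈ R, T.2 = P.2 → (S.1 ∩ T.1).Nonempty := fun T hT hTP =>
    (hproj S hS T hT).resolve_right (hTP ▸ hdisj)
  obtain ⟨u, hu⟩ := meets P hP rfl
  obtain ⟨v, hv⟩ := meets Q hQ hPQ.symm
  rw [Finset.mem_inter] at hu hv
  obtain ⟨i, hi⟩ := hSk
  have := (iDist_le_cdist hu.2 hv.2).trans (cdist_le_of_mem_cInt (hi ▸ hu.1) (hi ▸ hv.1))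
  omega

lemma ProjIntersecting.card_image_snd_le (hproj : ProjIntersecting R)
    (hrect : ∀ S ∈ R, IsRect k ℓ S) (hl : 0 < ℓ) (hkb : k ≤ b + 1)
    (hP : P ∈ R) (hQ : Q ∈ R) (hPQ : P.2 = Q.2) (hdist : b + 1 ≤ iDist P.1 Q.1) :
    (R.image Prod.snd).card ≤ 2 * ℓ - 1 := by
  obtain ⟨j₀, hj₀⟩ := (hrect P hP).2
  suffices (R.image Prod.snd).card ≤ 2 * (ℓ + 0) - 1 by simpa using this
  apply card_le_of_forall_iDist_cInt_le j₀ hl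
  simp only [Finset.mem_image, forall_exists_index, and_imp]
  rintro _ S hS rfl
  have hmeet := hproj.snd_inter_nonempty hkb hP hQ hPQ hdist hS (hrect S hS).1
  exact ⟨(hrect S hS).2, (iDist_eq_zero_of_inter_nonempty (hj₀ ▸ hmeet)).le⟩

end Rectangles

open Classical in
theorem stmt7_general (k ℓ b n₁ n₂ : ℕ) (hk : 0 < k) (hl : 0 < ℓ) (hkb : k ≤ b) (hlb : ℓ ≤ b)
    (h1 : 2 * (k + b) < n₁)
    (R : Finset (Finset (ZMod n₁) × Finset (ZMod n₂)))
    (hrect : ∀ P ∈ R, IsRect k ℓ P) (hproj : ProjIntersecting R)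
    (hlow : 1 ≤ ((R.image Prod.snd).filter
      (fun J => ∃ P ∈ R, ∃ Q ∈ R, P.2 = J ∧ Q.2 = J ∧ b + 1 ≤ iDist P.1 Q.1)).card)
    (hhigh : ((R.image Prod.snd).filter
      (fun J => ∃ P ∈ R, ∃ Q ∈ R, P.2 = J ∧ Q.2 = J ∧ b + 1 ≤ iDist P.1 Q.1)).card ≤ ℓ - 1) :
    R.card ≤ 4 * b ^ 2 + (ℓ - 1) * n₁ := by
  have : NeZero n₁ := ⟨by omega⟩
  set B := (R.image Prod.snd).filter
    (fun J => ∃ P ∈ R, ∃ Q ∈ R, P.2 = J ∧ Q.2 = J ∧ b + 1 ≤ iDist P.1 Q.1)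
  obtain ⟨J₀, hJ₀⟩ := Finset.card_pos.1 hlow
  obtain ⟨-, P, hP, Q, hQ, hPJ, hQJ, hPQ⟩ := Finset.mem_filter.1 hJ₀
  have hbases := hproj.card_image_snd_le hrect hl (by omega) hP hQ (hPJ.trans hQJ.symm) hPQ
  have hfree : ∀ Y ∈ R.image Prod.snd \ B, (R.filter (·.2 = Y)).card ≤ 2 * (k + b) - 1 := by
    intro Y hY
    rw [Finset.mem_sdiff] at hY
    refine card_filter_snd_eq_le_of_forall_iDist_le hk (fun S hS => (hrect S hS).1)
      fun S hS T hT hSY hTY => ?_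
    by_contra! hfar
    exact hY.2 (Finset.mem_filter.2 ⟨hY.1, S, hS, T, hT, hSY, hTY, hfar⟩)
  have hcard := card_le_of_card_fiber_le (Finset.filter_subset _ _)
    (fun Y _ => card_filter_snd_eq_le (fun S hS => (hrect S hS).1) Y) hfree
  obtain ⟨q, hq⟩ : ∃ q, q + B.card = ℓ - 1 := ⟨ℓ - 1 - B.card, by omega⟩
  calc R.card ≤ ((R.image Prod.snd).card - B.card) * (2 * (k + b) - 1) + B.card * n₁ := hcard
    _ ≤ (ℓ + q) * (2 * (k + b) - 1) + B.card * n₁ := by gcongr; omega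
    _ = ℓ * (2 * (k + b) - 1) + q * (2 * (k + b) - 1) + B.card * n₁ := by ring
    _ ≤ b * (4 * b) + q * n₁ + B.card * n₁ := by gcongr <;> omega
    _ = 4 * b ^ 2 + (ℓ - 1) * n₁ := by rw [← hq]; ring

open Classical in
theorem stmt7 (k ℓ b n₁ n₂ : ℕ) (hk : 0 < k) (hl : 0 < ℓ) (hkb : k ≤ b) (hlb : ℓ ≤ b)
    (h1 : 2 * (k + b) < n₁) (h2 : 2 * (ℓ + b) < n₂)
    (R : Finset (Finset (ZMod n₁) × Finset (ZMod n₂)))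
    (hrect : ∀ P ∈ R, IsRect k ℓ P) (hproj : ProjIntersecting R)
    (hlow : 1 ≤ ((R.image Prod.snd).filter
      (fun J => ∃ P ∈ R, ∃ Q ∈ R, P.2 = J ∧ Q.2 = J ∧ b + 1 ≤ iDist P.1 Q.1)).card)
    (hhigh : ((R.image Prod.snd).filter
      (fun J => ∃ P ∈ R, ∃ Q ∈ R, P.2 = J ∧ Q.2 = J ∧ b + 1 ≤ iDist P.1 Q.1)).card ≤ ℓ - 1) :
    R.card ≤ 4 * b ^ 2 + (ℓ - 1) * n₁ :=
  stmt7_general k ℓ b n₁ n₂ hk hl hkb hlb h1 R hrect hproj hlow hhigh
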